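/- arXiv:2605.08069 — 8 statements merged into one kernel-verified Lean document; each statement's English description precedes it below -/
import Mathlib

section
/- Let θ ∈ ℝ be fixed, b ~ N(0, A), and conditional on b let (θ̂ᵇ, b̂) be independent with θ̂ᵇ ~ N(θ + b, σ²) and b̂ ~ N(b, τ²). Define the rebiased estimator θ̂ʳᵇ = θ̂ᵇ − (A/(A+τ²)) b̂. Then, marginally (integrating over b), θ̂ʳᵇ − θ ~ N(0, σ² + Aτ²/(A+τ²)). -/
/-!
Writing `c = A / (A + τ²)`, the centred estimator is the linear form
`(1 - c) b + (e₁ - c e₂)` of the three independent centred Gaussians `b, e₁, e₂`.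
Linear combinations of independent Gaussians are Gaussian with variance `∑ aᵢ² vᵢ`, and
`(1 - c)² A + σ² + c² τ² = σ² + A τ² / (A + τ²)`.
-/

open MeasureTheory ProbabilityTheory NNReal

lemma gaussianReal_prod_map_mul_add_mul (a b m₁ m₂ : ℝ) (v₁ v₂ : ℝ≥0) :
    ((gaussianReal m₁ v₁).prod (gaussianReal m₂ v₂)).map (fun p => a * p.1 + b * p.2)
      = gaussianReal (a * m₁ + b * m₂)
          (.mk (a ^ 2) (sq_nonneg _) * v₁ + .mk (b ^ 2) (sq_nonneg _) * v₂) := by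
  have hmul : Measurable (Prod.map (a * · : ℝ → ℝ) (b * ·)) :=
    (measurable_const_mul a).prodMap (measurable_const_mul b)
  have hcomp : (fun p : ℝ × ℝ => a * p.1 + b * p.2)
      = (fun q : ℝ × ℝ => q.1 + q.2) ∘ Prod.map (a * ·) (b * ·) := rfl
  rw [hcomp, ← Measure.map_map measurable_add hmul,
    ← Measure.map_prod_map _ _ (measurable_const_mul a) (measurable_const_mul b),
    gaussianReal_map_const_mul, gaussianReal_map_const_mul]
  exact gaussianReal_conv_gaussianReal

theorem stmt1_general (θ : ℝ) (A σ2 τ2 : ℝ≥0) (hτ : 0 < τ2) :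
    Measure.map
      (fun ω : ℝ × ℝ × ℝ =>
        ((θ + ω.1 + ω.2.1) - ((A : ℝ) / ((A : ℝ) + (τ2 : ℝ))) * (ω.1 + ω.2.2)) - θ)
      ((gaussianReal 0 A).prod ((gaussianReal 0 σ2).prod (gaussianReal 0 τ2)))
    = gaussianReal 0 (σ2 + A * τ2 / (A + τ2)) := by
  set c : ℝ := (A : ℝ) / ((A : ℝ) + (τ2 : ℝ)) with hc
  have hnoise : Measurable fun q : ℝ × ℝ => 1 * q.1 + -c * q.2 := by fun_prop
  have hlinear : (fun ω : ℝ × ℝ × ℝ => ((θ + ω.1 + ω.2.1) - c * (ω.1 + ω.2.2)) - θ)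
      = (fun p : ℝ × ℝ => (1 - c) * p.1 + 1 * p.2) ∘
          Prod.map id (fun q : ℝ × ℝ => 1 * q.1 + -c * q.2) := by
    funext ⟨b, e₁, e₂⟩
    simp only [Function.comp_apply, Prod.map_apply, id_eq]
    ring
  rw [hlinear, ← Measure.map_map (by fun_prop) (measurable_id.prodMap hnoise),
    ← Measure.map_prod_map _ _ measurable_id hnoise, Measure.map_id,
    gaussianReal_prod_map_mul_add_mul, gaussianReal_prod_map_mul_add_mul]
  have hden : (A : ℝ) + τ2 ≠ 0 := by positivity
  congr 1
  · ring
  · apply NNReal.coe_injective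
    simp only [NNReal.coe_add, NNReal.coe_mul, NNReal.coe_mk, NNReal.coe_div, hc]
    field_simp
    ring

/-- **Marginal law of the rebiased estimator.** Let `θ` be fixed, `b ~ N(0, A)`, and
conditionally on `b` let `θ̂ᵇ = θ + b + e₁` with `e₁ ~ N(0, σ²)` and `b̂ = b + e₂` with
`e₂ ~ N(0, τ²)`, the errors independent. Then, marginally,
`θ̂ʳᵇ − θ = θ̂ᵇ − (A/(A+τ²))·b̂ − θ ~ N(0, σ² + Aτ²/(A+τ²))`. -/
theorem stmt1 (θ : ℝ) (A σ2 τ2 : ℝ≥0) (hσ : 0 < σ2) (hτ : 0 < τ2) :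
    Measure.map
      (fun ω : ℝ × ℝ × ℝ =>
        ((θ + ω.1 + ω.2.1) - ((A : ℝ) / ((A : ℝ) + (τ2 : ℝ))) * (ω.1 + ω.2.2)) - θ)
      ((gaussianReal 0 A).prod ((gaussianReal 0 σ2).prod (gaussianReal 0 τ2)))
    = gaussianReal 0 (σ2 + A * τ2 / (A + τ2)) :=
  stmt1_general θ A σ2 τ2 hτ
end

section
/- Under the same model (θ fixed, b ~ N(0,A), θ̂ᵇ | b ~ N(θ+b, σ²), b̂ | b ~ N(b, τ²), conditionally independent), the interval I = [θ̂ʳᵇ − z·s, θ̂ʳᵇ + z·s] with θ̂ʳᵇ = θ̂ᵇ − (A/(A+τ²))b̂, s = (σ² + Aτ²/(A+τ²))^{1/2}, and z the (1−α/2)-quantile of the standard normal, satisfies P(θ ∈ I) = 1 − α. -/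
open MeasureTheory ProbabilityTheory NNReal Set

/-! The error `θ̂ʳᵇ - θ = (1 - c) b + e₁ - c e₂` with `c = A / (A + τ²)` is a linear combination of
independent centred Gaussians, hence centred Gaussian with variance
`(1 - c)² A + σ² + c² τ² = σ² + A τ² / (A + τ²) = s²`. So `θ ∈ I` iff the standardized error lies
in `[-z, z]`, which by the symmetry of `N(0, 1)` has probability `2 Φ(z) - 1 = 1 - α`. -/

lemma gaussianReal_prod_map_linear {a b m₁ m₂ : ℝ} {v₁ v₂ v : ℝ≥0}
    (hv : (v : ℝ) = a ^ 2 * v₁ + b ^ 2 * v₂) :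
    ((gaussianReal m₁ v₁).prod (gaussianReal m₂ v₂)).map (fun p => a * p.1 + b * p.2)
      = gaussianReal (a * m₁ + b * m₂) v := by
  have hcomp : (fun p : ℝ × ℝ => a * p.1 + b * p.2)
      = (fun p => p.1 + p.2) ∘ Prod.map (a * ·) (b * ·) := rfl
  rw [hcomp, ← Measure.map_map (by fun_prop) (by fun_prop),
    ← Measure.map_prod_map _ _ (by fun_prop) (by fun_prop), gaussianReal_map_const_mul,
    gaussianReal_map_const_mul]
  exact gaussianReal_conv_gaussianReal.trans (congrArg _ (NNReal.eq hv).symm)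

lemma gaussianReal_prod_prod_map_linear {a b d m₁ m₂ m₃ : ℝ} {v₁ v₂ v₃ v : ℝ≥0}
    (hv : (v : ℝ) = a ^ 2 * v₁ + b ^ 2 * v₂ + d ^ 2 * v₃) :
    ((gaussianReal m₁ v₁).prod ((gaussianReal m₂ v₂).prod (gaussianReal m₃ v₃))).map
        (fun ω => a * ω.1 + b * ω.2.1 + d * ω.2.2)
      = gaussianReal (a * m₁ + b * m₂ + d * m₃) v := by
  set w : ℝ≥0 := ⟨b ^ 2 * v₂ + d ^ 2 * v₃, by positivity⟩
  have hw : (w : ℝ) = b ^ 2 * v₂ + d ^ 2 * v₃ := rfl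
  have hcomp : (fun ω : ℝ × ℝ × ℝ => a * ω.1 + b * ω.2.1 + d * ω.2.2)
      = (fun p => a * p.1 + 1 * p.2) ∘ Prod.map id (fun q => b * q.1 + d * q.2) := by
    ext
    simp only [Function.comp_apply, Prod.map_fst, Prod.map_snd, id_eq]
    ring
  rw [hcomp, ← Measure.map_map (by fun_prop) (by fun_prop),
    ← Measure.map_prod_map _ _ (by fun_prop) (by fun_prop), Measure.map_id,
    gaussianReal_prod_map_linear hw, gaussianReal_prod_map_linear (v := v)]
  · congr 1
    ring
  · rw [hv, hw]
    ring

section Symmetric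

variable {μ : Measure ℝ} [IsProbabilityMeasure μ]

lemma measureReal_Iio_neg_eq_one_sub_of_map_neg (hμ : μ.map (fun x => -x) = μ) (z : ℝ) :
    μ.real (Iio (-z)) = 1 - μ.real (Iic z) := by
  have h : μ.real (Iio (-z)) = μ.real (Ioi z) := by
    conv_lhs => rw [← hμ]
    rw [map_measureReal_apply measurable_neg measurableSet_Iio]
    simp
  rw [h, ← compl_Iic, measureReal_compl measurableSet_Iic, probReal_univ]

lemma measureReal_Icc_neg_self_of_map_neg (hμ : μ.map (fun x => -x) = μ) {z : ℝ} (hz : 0 ≤ z) :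
    μ.real (Icc (-z) z) = 2 * μ.real (Iic z) - 1 := by
  have hIcc : Icc (-z) z = Iic z \ Iio (-z) := by
    ext x
    simp [and_comm]
  rw [hIcc, measureReal_sdiff (Iio_subset_Iic (by linarith)) measurableSet_Iio,
    measureReal_Iio_neg_eq_one_sub_of_map_neg hμ]
  ring

lemma nonneg_of_half_lt_measureReal_Iic (hμ : μ.map (fun x => -x) = μ) {z : ℝ}
    (h : 1 / 2 < μ.real (Iic z)) : 0 ≤ z := by
  by_contra! hz
  have hle := measureReal_mono (μ := μ) (Iic_subset_Iio.2 (by linarith : z < -z))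
  rw [measureReal_Iio_neg_eq_one_sub_of_map_neg hμ] at hle
  linarith

end Symmetric

lemma gaussianReal_zero_map_neg (v : ℝ≥0) :
    (gaussianReal 0 v).map (fun x => -x) = gaussianReal 0 v := by
  simpa using gaussianReal_map_neg (μ := 0) (v := v)

lemma gaussianReal_zero_Icc_mul_sqrt {v : ℝ≥0} (hv : v ≠ 0) (z : ℝ) :
    gaussianReal 0 v (Icc (-(z * √v)) (z * √v)) = gaussianReal 0 1 (Icc (-z) z) := by
  have hsqrt : 0 < √(v : ℝ) := Real.sqrt_pos.2 (by positivity)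
  have hscale : (gaussianReal 0 1).map (√v * ·) = gaussianReal 0 v := by
    rw [gaussianReal_map_const_mul, mul_zero]
    congr
    ext
    simp
  rw [← hscale, Measure.map_apply (by fun_prop) measurableSet_Icc,
    preimage_const_mul_Icc₀ _ _ hsqrt]
  congr 2 <;> field_simp

lemma sq_one_sub_div_mul_add_sq_div_mul {A τ : ℝ} (hA : 0 ≤ A) (hτ : 0 ≤ τ) :
    (1 - A / (A + τ)) ^ 2 * A + (A / (A + τ)) ^ 2 * τ = A * τ / (A + τ) := by
  rcases (add_nonneg hA hτ).eq_or_lt with h | h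
  · obtain rfl : A = 0 := by linarith
    simp
  · field_simp
    ring

theorem stmt2_general (θ : ℝ) (A σ2 τ2 : ℝ≥0) (hσ : 0 < σ2)
    (α : ℝ) (hα : α ∈ Set.Ioo (0 : ℝ) 1)
    (z : ℝ) (hz : gaussianReal 0 1 (Set.Iic z) = ENNReal.ofReal (1 - α / 2)) :
    (((gaussianReal 0 A).prod ((gaussianReal 0 σ2).prod (gaussianReal 0 τ2))))
      {ω : ℝ × ℝ × ℝ |
        let θrb := (θ + ω.1 + ω.2.1) - ((A : ℝ) / ((A : ℝ) + (τ2 : ℝ))) * (ω.1 + ω.2.2)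
        let s := Real.sqrt ((σ2 : ℝ) + (A : ℝ) * (τ2 : ℝ) / ((A : ℝ) + (τ2 : ℝ)))
        θrb - z * s ≤ θ ∧ θ ≤ θrb + z * s}
    = ENNReal.ofReal (1 - α) := by
  obtain ⟨hα0, hα1⟩ := hα
  set P := (gaussianReal 0 A).prod ((gaussianReal 0 σ2).prod (gaussianReal 0 τ2))
  set c : ℝ := A / (A + τ2)
  set s2 : ℝ≥0 := σ2 + A * τ2 / (A + τ2)
  have hs2 : (s2 : ℝ) = σ2 + A * τ2 / (A + τ2) := by simp [s2]
  have hvar : (s2 : ℝ) = (1 - c) ^ 2 * A + 1 ^ 2 * σ2 + (-c) ^ 2 * τ2 := by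
    rw [hs2, ← sq_one_sub_div_mul_add_sq_div_mul A.coe_nonneg τ2.coe_nonneg]
    ring
  have hlaw := gaussianReal_prod_prod_map_linear (m₁ := 0) (m₂ := 0) (m₃ := 0) hvar
  simp only [mul_zero, add_zero] at hlaw
  have hΦ : (gaussianReal 0 1).real (Iic z) = 1 - α / 2 := by
    rw [measureReal_def, hz, ENNReal.toReal_ofReal (by linarith)]
  have hz0 : 0 ≤ z := nonneg_of_half_lt_measureReal_Iic (gaussianReal_zero_map_neg 1) (by linarith)
  calc _ = P.map (fun ω => (1 - c) * ω.1 + 1 * ω.2.1 + (-c) * ω.2.2)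
          (Icc (-(z * √s2)) (z * √s2)) := by
        rw [Measure.map_apply (by fun_prop) measurableSet_Icc]
        congr 1
        ext ω
        simp only [mem_ofPred_eq, mem_preimage, mem_Icc, hs2]
        constructor <;> rintro ⟨h₁, h₂⟩ <;> constructor <;> linarith
    _ = gaussianReal 0 1 (Icc (-z) z) := by
        rw [hlaw, gaussianReal_zero_Icc_mul_sqrt (by positivity)]
    _ = ENNReal.ofReal (1 - α) := by
        rw [← ofReal_measureReal,
          measureReal_Icc_neg_self_of_map_neg (gaussianReal_zero_map_neg 1) hz0, hΦ]
        ring_nf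

/-- **Exact coverage of the rebiased interval.** Under the model with `θ` fixed,
`b ~ N(0,A)`, `θ̂ᵇ = θ + b + e₁`, `b̂ = b + e₂` with independent Gaussian errors
`e₁ ~ N(0,σ²)`, `e₂ ~ N(0,τ²)`, the interval `θ̂ʳᵇ ± z·s` with
`θ̂ʳᵇ = θ̂ᵇ − (A/(A+τ²))b̂`, `s = (σ² + Aτ²/(A+τ²))^{1/2}`, and `z` the
`(1−α/2)`-quantile of `N(0,1)`, covers `θ` with probability exactly `1−α`. -/
theorem stmt2 (θ : ℝ) (A σ2 τ2 : ℝ≥0) (hσ : 0 < σ2) (hτ : 0 < τ2)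
    (α : ℝ) (hα : α ∈ Set.Ioo (0 : ℝ) 1)
    (z : ℝ) (hz : gaussianReal 0 1 (Set.Iic z) = ENNReal.ofReal (1 - α / 2)) :
    (((gaussianReal 0 A).prod ((gaussianReal 0 σ2).prod (gaussianReal 0 τ2))))
      {ω : ℝ × ℝ × ℝ |
        let θrb := (θ + ω.1 + ω.2.1) - ((A : ℝ) / ((A : ℝ) + (τ2 : ℝ))) * (ω.1 + ω.2.2)
        let s := Real.sqrt ((σ2 : ℝ) + (A : ℝ) * (τ2 : ℝ) / ((A : ℝ) + (τ2 : ℝ)))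
        θrb - z * s ≤ θ ∧ θ ≤ θrb + z * s}
    = ENNReal.ofReal (1 - α) :=
  stmt2_general θ A σ2 τ2 hσ α hα z hz
end

section
/- In the prediction-powered inference setup, for the estimator θ̂_λ = Ȳ + λ(Z̃ − Z̄), where Ȳ, Z̄ are means of m i.i.d. labeled pairs (with Var(Y) = w², Var(h(X)) = v², Cov(h(X), Y) = c) and Z̃ is the mean of M independent unlabeled predictions with variance v², the variance is Var(θ̂_λ) = w²/m + λ²v²(1/M + 1/m) − 2λc/m, and this is minimized over λ ∈ ℝ at λ* = (M/(m+M))·(c/v²). -/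
open MeasureTheory ProbabilityTheory

/-- Covariance of two real random variables. -/
noncomputable def cov' {Ω : Type*} [MeasurableSpace Ω] (μ : Measure Ω) (f g : Ω → ℝ) : ℝ :=
  ∫ ω, (f ω - ∫ x, f x ∂μ) * (g ω - ∫ x, g x ∂μ) ∂μ

lemma variance_comp_map' {Ω Ω' E : Type*} [MeasurableSpace Ω] [MeasurableSpace Ω']
    [MeasurableSpace E] {μ : Measure Ω} {ν : Measure Ω'} {f : Ω → E} {f' : Ω' → E}
    (hf : Measurable f) (hf' : Measurable f')
    (hmap : μ.map f = ν.map f') {g : E → ℝ} (hg : Measurable g) :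
    variance (fun ω => g (f ω)) μ = variance (fun ω => g (f' ω)) ν := by
  have hmean : (∫ ω, g (f ω) ∂μ) = ∫ ω, g (f' ω) ∂ν := by
    rw [← integral_map hf.aemeasurable hg.aestronglyMeasurable, hmap,
      integral_map hf'.aemeasurable hg.aestronglyMeasurable]
  unfold variance evariance
  simp only [hmean]
  congr 1
  have hmg : Measurable fun x => (‖g x - ∫ ω, g (f' ω) ∂ν‖ₑ : ENNReal) ^ 2 := by
    measurability
  rw [← lintegral_map hmg hf, hmap, lintegral_map hmg hf']

lemma variance_eq_integral' {Ω : Type*} [MeasurableSpace Ω] {μ : Measure Ω}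
    [IsProbabilityMeasure μ] {f : Ω → ℝ} (hf : MemLp f 2 μ) :
    variance f μ = ∫ ω, (f ω - ∫ x, f x ∂μ) ^ 2 ∂μ := by
  have := variance_eq_integral hf.aestronglyMeasurable.aemeasurable
  simpa using this

lemma variance_linear' {Ω : Type*} [MeasurableSpace Ω] {μ : Measure Ω}
    [IsProbabilityMeasure μ] {f g : Ω → ℝ} (hf : MemLp f 2 μ) (hg : MemLp g 2 μ) (a b : ℝ) :
    variance (fun ω => a * f ω + b * g ω) μ
      = a ^ 2 * variance f μ + b ^ 2 * variance g μ
        + 2 * a * b * ∫ ω, (f ω - ∫ x, f x ∂μ) * (g ω - ∫ x, g x ∂μ) ∂μ := by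
  have hsum : MemLp (fun ω => a * f ω + b * g ω) 2 μ :=
    (hf.const_mul a).add (hg.const_mul b)
  set mf := ∫ x, f x ∂μ with hmf
  set mg := ∫ x, g x ∂μ with hmg
  have hif : Integrable f μ := hf.integrable one_le_two
  have hig : Integrable g μ := hg.integrable one_le_two
  have hI : (∫ ω, (a * f ω + b * g ω) ∂μ) = a * mf + b * mg := by
    rw [integral_add (hif.const_mul a) (hig.const_mul b), integral_const_mul, integral_const_mul]
  have hF : MemLp (fun ω => f ω - mf) 2 μ := hf.sub (memLp_const mf)
  have hG : MemLp (fun ω => g ω - mg) 2 μ := hg.sub (memLp_const mg)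
  have hF2 : Integrable (fun ω => (f ω - mf) ^ 2) μ := hF.integrable_sq
  have hG2 : Integrable (fun ω => (g ω - mg) ^ 2) μ := hG.integrable_sq
  have hFG : Integrable (fun ω => (f ω - mf) * (g ω - mg)) μ := by
    have : MemLp ((fun ω => f ω - mf) • (fun ω => g ω - mg)) 1 μ :=
      hG.smul hF
    rw [memLp_one_iff_integrable] at this
    exact this
  rw [variance_eq_integral' hsum, variance_eq_integral' hf, variance_eq_integral' hg, hI]
  calc (∫ ω, (a * f ω + b * g ω - (a * mf + b * mg)) ^ 2 ∂μ)
      = ∫ ω, (a ^ 2 * (f ω - mf) ^ 2 + b ^ 2 * (g ω - mg) ^ 2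
          + 2 * a * b * ((f ω - mf) * (g ω - mg))) ∂μ := by
        congr 1; funext ω; ring
    _ = a ^ 2 * ∫ ω, (f ω - mf) ^ 2 ∂μ + b ^ 2 * ∫ ω, (g ω - mg) ^ 2 ∂μ
          + 2 * a * b * ∫ ω, (f ω - mf) * (g ω - mg) ∂μ := by
        have h1 : Integrable (fun ω => a ^ 2 * (f ω - mf) ^ 2) μ := hF2.const_mul _
        have h2 : Integrable (fun ω => b ^ 2 * (g ω - mg) ^ 2) μ := hG2.const_mul _
        have h3 : Integrable (fun ω => 2 * a * b * ((f ω - mf) * (g ω - mg))) μ :=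
          hFG.const_mul _
        have h12 : Integrable (fun ω => a ^ 2 * (f ω - mf) ^ 2 + b ^ 2 * (g ω - mg) ^ 2) μ :=
          h1.add h2
        rw [integral_add h12 h3, integral_add h1 h2,
          integral_const_mul, integral_const_mul, integral_const_mul]

open MeasureTheory ProbabilityTheory

section Aux
variable {Ω : Type*} [MeasurableSpace Ω] {μ : Measure Ω} [IsProbabilityMeasure μ]

theorem var_formula
    (m M : ℕ) (hm : 0 < m) (hM : 0 < M)
    (Z Y : Fin m → Ω → ℝ) (Zt : Fin M → Ω → ℝ)
    (hZmeas : ∀ j, Measurable (Z j)) (hYmeas : ∀ j, Measurable (Y j))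
    (hZtmeas : ∀ k, Measurable (Zt k))
    (hindep : iIndepFun
      (Sum.elim (fun j ω => (Z j ω, Y j ω)) (fun k ω => (Zt k ω, 0))) μ)
    (hident : ∀ j : Fin m, Measure.map (fun ω => (Z j ω, Y j ω)) μ
      = Measure.map (fun ω => (Z ⟨0, hm⟩ ω, Y ⟨0, hm⟩ ω)) μ)
    (hidentU : ∀ k : Fin M, Measure.map (Zt k) μ = Measure.map (Z ⟨0, hm⟩) μ)
    (hZ2 : MemLp (Z ⟨0, hm⟩) 2 μ) (hY2 : MemLp (Y ⟨0, hm⟩) 2 μ)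
    (w2 v2 c : ℝ)
    (hw : variance (Y ⟨0, hm⟩) μ = w2) (hv : variance (Z ⟨0, hm⟩) μ = v2)
    (hc : (∫ ω, (Z ⟨0, hm⟩ ω - ∫ x, Z ⟨0, hm⟩ x ∂μ) * (Y ⟨0, hm⟩ ω - ∫ x, Y ⟨0, hm⟩ x ∂μ) ∂μ) = c)
    (lam : ℝ) :
    variance (fun ω =>
        (m : ℝ)⁻¹ * ∑ j, Y j ω +
          lam * ((M : ℝ)⁻¹ * ∑ k, Zt k ω - (m : ℝ)⁻¹ * ∑ j, Z j ω)) μ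
      = w2 / m + lam ^ 2 * v2 * (1 / M + 1 / m) - 2 * lam * c / m := by
  have hm' : (0:ℝ) < m := Nat.cast_pos.mpr hm
  have hM' : (0:ℝ) < M := Nat.cast_pos.mpr hM
  set a : ℝ := (m : ℝ)⁻¹ with ha
  set b : ℝ := -(lam * (m : ℝ)⁻¹) with hb
  set d : ℝ := lam * (M : ℝ)⁻¹ with hd
  set g1 : ℝ × ℝ → ℝ := fun p => a * p.2 + b * p.1 with hg1
  set g2 : ℝ × ℝ → ℝ := fun p => d * p.1 with hg2
  have hg1m : Measurable g1 := (measurable_snd.const_mul _).add (measurable_fst.const_mul _)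
  have hg2m : Measurable g2 := measurable_fst.const_mul _
  set F : Fin m ⊕ Fin M → Ω → ℝ × ℝ :=
    Sum.elim (fun j ω => (Z j ω, Y j ω)) (fun k ω => (Zt k ω, 0)) with hF
  set X : Fin m ⊕ Fin M → Ω → ℝ :=
    Sum.elim (fun j ω => a * Y j ω + b * Z j ω) (fun k ω => d * Zt k ω) with hX
  have hpair : ∀ j, Measurable fun ω => (Z j ω, Y j ω) :=
    fun j => (hZmeas j).prodMk (hYmeas j)
  -- independence of the X i
  have hXindep : iIndepFun X μ := by
    have h := hindep.comp (Sum.elim (fun _ => g1) (fun _ => g2))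
      (by rintro (j | k); exacts [hg1m, hg2m])
    convert h using 1
    funext i; rcases i with j | k <;> rfl
  -- MemLp of the X i
  have hmemP0 : MemLp (fun ω => g1 (Z ⟨0, hm⟩ ω, Y ⟨0, hm⟩ ω)) 2 μ :=
    (hY2.const_mul a).add (hZ2.const_mul b)
  have hmem : ∀ i, MemLp (X i) 2 μ := by
    rintro (j | k)
    · have h1 : MemLp g1 2 (Measure.map (fun ω => (Z ⟨0, hm⟩ ω, Y ⟨0, hm⟩ ω)) μ) :=
        (memLp_map_measure_iff hg1m.aestronglyMeasurable
          (hpair ⟨0, hm⟩).aemeasurable).mpr hmemP0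
      rw [← hident j] at h1
      exact (memLp_map_measure_iff hg1m.aestronglyMeasurable (hpair j).aemeasurable).mp h1
    · have hZt2 : MemLp (Zt k) 2 μ := by
        have h1 : MemLp id 2 (Measure.map (Z ⟨0, hm⟩) μ) :=
          (memLp_map_measure_iff aestronglyMeasurable_id
            (hZmeas ⟨0, hm⟩).aemeasurable).mpr hZ2
        rw [← hidentU k] at h1
        exact (memLp_map_measure_iff aestronglyMeasurable_id (hZtmeas k).aemeasurable).mp h1
      exact hZt2.const_mul d
  -- the estimator is the sum of the X i
  have hfun : (fun ω =>
      (m : ℝ)⁻¹ * ∑ j, Y j ω +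
        lam * ((M : ℝ)⁻¹ * ∑ k, Zt k ω - (m : ℝ)⁻¹ * ∑ j, Z j ω))
      = ∑ i, X i := by
    funext ω
    rw [Finset.sum_apply, Fintype.sum_sum_type]
    simp only [hX, Sum.elim_inl, Sum.elim_inr]
    rw [Finset.sum_add_distrib, ← Finset.mul_sum, ← Finset.mul_sum, ← Finset.mul_sum]
    rw [ha, hb, hd]; ring
  -- variance of each X i
  have hvar1 : ∀ j : Fin m, variance (X (Sum.inl j)) μ
      = a ^ 2 * w2 + b ^ 2 * v2 + 2 * a * b * c := by
    intro j
    have heq : variance (fun ω => g1 ((fun ω => (Z j ω, Y j ω)) ω)) μ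
        = variance (fun ω => g1 ((fun ω => (Z ⟨0, hm⟩ ω, Y ⟨0, hm⟩ ω)) ω)) μ :=
      variance_comp_map' (hpair j) (hpair ⟨0, hm⟩) (hident j) hg1m
    have h2 : variance (fun ω => a * Y ⟨0, hm⟩ ω + b * Z ⟨0, hm⟩ ω) μ
        = a ^ 2 * w2 + b ^ 2 * v2 + 2 * a * b * c := by
      rw [variance_linear' hY2 hZ2 a b, hw, hv]
      have hcomm : (∫ ω, (Y ⟨0, hm⟩ ω - ∫ x, Y ⟨0, hm⟩ x ∂μ)
            * (Z ⟨0, hm⟩ ω - ∫ x, Z ⟨0, hm⟩ x ∂μ) ∂μ)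
          = ∫ ω, (Z ⟨0, hm⟩ ω - ∫ x, Z ⟨0, hm⟩ x ∂μ)
            * (Y ⟨0, hm⟩ ω - ∫ x, Y ⟨0, hm⟩ x ∂μ) ∂μ := by
        congr 1; funext ω; ring
      rw [hcomm, hc]
    calc variance (X (Sum.inl j)) μ
        = variance (fun ω => g1 ((fun ω => (Z ⟨0, hm⟩ ω, Y ⟨0, hm⟩ ω)) ω)) μ := heq
      _ = a ^ 2 * w2 + b ^ 2 * v2 + 2 * a * b * c := h2
  have hvar2 : ∀ k : Fin M, variance (X (Sum.inr k)) μ = d ^ 2 * v2 := by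
    intro k
    have heq : variance (fun ω => Zt k ω) μ = variance (fun ω => Z ⟨0, hm⟩ ω) μ :=
      variance_comp_map' (hZtmeas k) (hZmeas ⟨0, hm⟩) (hidentU k) measurable_id
    have : variance (X (Sum.inr k)) μ = d ^ 2 * variance (Zt k) μ := variance_const_mul d (Zt k) μ
    rw [this, heq, hv]
  -- put everything together
  rw [hfun, IndepFun.variance_sum (fun i _ => hmem i)
    (fun i _ j _ hij => hXindep.indepFun hij)]
  rw [Fintype.sum_sum_type]
  have e1 : (∑ j : Fin m, variance (X (Sum.inl j)) μ)
      = m * (a ^ 2 * w2 + b ^ 2 * v2 + 2 * a * b * c) := by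
    rw [Finset.sum_congr rfl fun j _ => hvar1 j, Finset.sum_const, Finset.card_univ,
      Fintype.card_fin, nsmul_eq_mul]
  have e2 : (∑ k : Fin M, variance (X (Sum.inr k)) μ) = M * (d ^ 2 * v2) := by
    rw [Finset.sum_congr rfl fun k _ => hvar2 k, Finset.sum_const, Finset.card_univ,
      Fintype.card_fin, nsmul_eq_mul]
  rw [e1, e2, ha, hb, hd]
  field_simp
  ring

end Aux

/-- **Variance of the power-tuned PPI estimator and its minimizer.**
Labeled pairs `(Z j, Y j) = (h(X_j), Y_j)`, `j < m`, are i.i.d., independent of the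
i.i.d. unlabeled predictions `Zt k = h(X̃_k)`, `k < M`, which have the same marginal law
as `Z 0`. With `Var(Y) = w²`, `Var(h(X)) = v² > 0`, `Cov(h(X), Y) = c`, the estimator
`θ̂_λ = Ȳ + λ(Z̃ − Z̄)` has variance `w²/m + λ²v²(1/M + 1/m) − 2λc/m`, minimized over
`λ ∈ ℝ` at `λ* = (M/(m+M))·(c/v²)`. -/
theorem stmt4 {Ω : Type*} [MeasurableSpace Ω] (μ : Measure Ω) [IsProbabilityMeasure μ]
    (m M : ℕ) (hm : 0 < m) (hM : 0 < M)
    (Z Y : Fin m → Ω → ℝ) (Zt : Fin M → Ω → ℝ)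
    (hZmeas : ∀ j, Measurable (Z j)) (hYmeas : ∀ j, Measurable (Y j))
    (hZtmeas : ∀ k, Measurable (Zt k))
    (hindep : iIndepFun
      (Sum.elim (fun j ω => (Z j ω, Y j ω)) (fun k ω => (Zt k ω, 0))) μ)
    (hident : ∀ j : Fin m, Measure.map (fun ω => (Z j ω, Y j ω)) μ
      = Measure.map (fun ω => (Z ⟨0, hm⟩ ω, Y ⟨0, hm⟩ ω)) μ)
    (hidentU : ∀ k : Fin M, Measure.map (Zt k) μ = Measure.map (Z ⟨0, hm⟩) μ)
    (hZ2 : MemLp (Z ⟨0, hm⟩) 2 μ) (hY2 : MemLp (Y ⟨0, hm⟩) 2 μ)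
    (w2 v2 c : ℝ) (hw2 : 0 < w2) (hv2 : 0 < v2)
    (hw : variance (Y ⟨0, hm⟩) μ = w2) (hv : variance (Z ⟨0, hm⟩) μ = v2)
    (hc : cov' μ (Z ⟨0, hm⟩) (Y ⟨0, hm⟩) = c) :
    (∀ lam : ℝ,
      variance (fun ω =>
          (m : ℝ)⁻¹ * ∑ j, Y j ω +
            lam * ((M : ℝ)⁻¹ * ∑ k, Zt k ω - (m : ℝ)⁻¹ * ∑ j, Z j ω)) μ
        = w2 / m + lam ^ 2 * v2 * (1 / M + 1 / m) - 2 * lam * c / m) ∧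
    (∀ lam : ℝ,
      variance (fun ω =>
          (m : ℝ)⁻¹ * ∑ j, Y j ω +
            ((M : ℝ) / (m + M) * (c / v2)) *
              ((M : ℝ)⁻¹ * ∑ k, Zt k ω - (m : ℝ)⁻¹ * ∑ j, Z j ω)) μ
        ≤ variance (fun ω =>
          (m : ℝ)⁻¹ * ∑ j, Y j ω +
            lam * ((M : ℝ)⁻¹ * ∑ k, Zt k ω - (m : ℝ)⁻¹ * ∑ j, Z j ω)) μ) := by
  have key : ∀ lam : ℝ,
      variance (fun ω =>
          (m : ℝ)⁻¹ * ∑ j, Y j ω +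
            lam * ((M : ℝ)⁻¹ * ∑ k, Zt k ω - (m : ℝ)⁻¹ * ∑ j, Z j ω)) μ
        = w2 / m + lam ^ 2 * v2 * (1 / M + 1 / m) - 2 * lam * c / m :=
    fun lam => var_formula m M hm hM Z Y Zt hZmeas hYmeas hZtmeas hindep hident hidentU
      hZ2 hY2 w2 v2 c hw hv hc lam
  refine ⟨key, fun lam => ?_⟩
  rw [key lam, key ((M : ℝ) / (m + M) * (c / v2))]
  have hm' : (0:ℝ) < m := Nat.cast_pos.mpr hm
  have hM' : (0:ℝ) < M := Nat.cast_pos.mpr hM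
  set l0 : ℝ := (M : ℝ) / (m + M) * (c / v2) with hl0
  have hA : (0:ℝ) < v2 * (1 / M + 1 / m) := by positivity
  have hkey : (w2 / m + lam ^ 2 * v2 * (1 / M + 1 / m) - 2 * lam * c / m)
      - (w2 / m + l0 ^ 2 * v2 * (1 / M + 1 / m) - 2 * l0 * c / m)
      = (v2 * (1 / M + 1 / m)) * (lam - l0) ^ 2 := by
    rw [hl0]
    have h1 : ((m:ℝ) + M) ≠ 0 := by positivity
    field_simp
    ring
  linarith [mul_nonneg hA.le (sq_nonneg (lam - l0)), hkey]
end

section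
/- Let Σ be a 2×2 positive definite matrix with inverse Ω, and let (Z, L) given b be bivariate normal with mean (0, b) and covariance Σ, where b ~ G for a probability distribution G on ℝ. Then the conditional CDF of Z given L = l equals F_G(z | l) = (C(Σ)/f_G(l)) ∫_{−∞}^{z} exp(−u²/(2Σ₁₁)) · f_G((Ω₁₂/Ω₂₂)u + l; Ω₂₂⁻¹) du, where f_G(t; v) = ∫ φ(t − b; v) dG(b) is the Gaussian mixture density with noise variance v, f_G(l) = f_G(l; Σ₂₂), and C(Σ) = (2π|Σ|Ω₂₂)^{−1/2}. -/
open MeasureTheory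

/-! Completing the square in `u` splits the bivariate normal density at `(u, l)` into the
`N(0, Σ₁₁)` density at `u` times the density of `N(b, |Σ|/Σ₁₁)` at `l - (Σ₁₂/Σ₁₁) u`; integrating
in `b` turns the second factor into the mixture density `f_G(·; Ω₂₂⁻¹)`. -/

/-- Gaussian mixture density `f_G(t; v) = ∫ φ(t − b; v) dG(b)`. -/
noncomputable def gmix (G : Measure ℝ) (v t : ℝ) : ℝ :=
  ∫ b, (Real.sqrt (2 * Real.pi * v))⁻¹ * Real.exp (-(t - b) ^ 2 / (2 * v)) ∂G

/-- Bivariate normal density with mean `(0, b)` and covariance `Σ = [[s11,s12],[s12,s22]]`,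
evaluated at `(z, l)`. -/
noncomputable def bivNormal (s11 s12 s22 b z l : ℝ) : ℝ :=
  (2 * Real.pi * Real.sqrt (s11 * s22 - s12 ^ 2))⁻¹ *
    Real.exp (-(1 / 2) *
      ((s22 * z ^ 2 - 2 * s12 * z * (l - b) + s11 * (l - b) ^ 2) / (s11 * s22 - s12 ^ 2)))

lemma inv_sqrt_two_pi_mul_inv_sqrt_two_pi_div {a d : ℝ} (ha : 0 < a) (hd : 0 < d) :
    (Real.sqrt (2 * Real.pi * a))⁻¹ * (Real.sqrt (2 * Real.pi * (d / a)))⁻¹ =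
      (2 * Real.pi * Real.sqrt d)⁻¹ := by
  rw [← mul_inv, ← Real.sqrt_mul (by positivity),
    show 2 * Real.pi * a * (2 * Real.pi * (d / a)) = (2 * Real.pi) ^ 2 * d by
      field_simp,
    Real.sqrt_mul (by positivity), Real.sqrt_sq (by positivity)]

lemma bivNormal_eq_mul {s11 s12 s22 : ℝ} (hs11 : 0 < s11) (hdet : 0 < s11 * s22 - s12 ^ 2)
    (b u l : ℝ) :
    bivNormal s11 s12 s22 b u l =
      (Real.sqrt (2 * Real.pi * s11))⁻¹ * Real.exp (-u ^ 2 / (2 * s11)) *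
        ((Real.sqrt (2 * Real.pi * ((s11 * s22 - s12 ^ 2) / s11)))⁻¹ *
          Real.exp (-((-s12 / s11 * u + l) - b) ^ 2 / (2 * ((s11 * s22 - s12 ^ 2) / s11)))) := by
  rw [bivNormal, mul_mul_mul_comm, inv_sqrt_two_pi_mul_inv_sqrt_two_pi_div hs11 hdet,
    ← Real.exp_add]
  congr 2
  -- keep `|Σ|` atomic so that `field_simp` clears it as a single nonzero denominator
  set d := s11 * s22 - s12 ^ 2 with hd
  field_simp
  rw [hd]
  ring

lemma integral_bivNormal_eq_mul_gmix (G : Measure ℝ) {s11 s12 s22 : ℝ} (hs11 : 0 < s11)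
    (hdet : 0 < s11 * s22 - s12 ^ 2) (u l : ℝ) :
    ∫ b, bivNormal s11 s12 s22 b u l ∂G =
      (Real.sqrt (2 * Real.pi * s11))⁻¹ * (Real.exp (-u ^ 2 / (2 * s11)) *
        gmix G ((s11 * s22 - s12 ^ 2) / s11) (-s12 / s11 * u + l)) := by
  simp only [bivNormal_eq_mul hs11 hdet, integral_const_mul, mul_assoc, gmix]

theorem stmt6_general (G : Measure ℝ)
    (s11 s12 s22 : ℝ) (hs11 : 0 < s11)
    (hdet : 0 < s11 * s22 - s12 ^ 2)
    (z l : ℝ) :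
    (∫ u in Set.Iic z, ∫ b, bivNormal s11 s12 s22 b u l ∂G) / gmix G s22 l =
      (Real.sqrt (2 * Real.pi * (s11 * s22 - s12 ^ 2) *
          (s11 / (s11 * s22 - s12 ^ 2))))⁻¹ / gmix G s22 l *
        ∫ u in Set.Iic z,
          Real.exp (-u ^ 2 / (2 * s11)) *
            gmix G ((s11 * s22 - s12 ^ 2) / s11) (-s12 / s11 * u + l) := by
  have hC : 2 * Real.pi * (s11 * s22 - s12 ^ 2) * (s11 / (s11 * s22 - s12 ^ 2)) =
      2 * Real.pi * s11 := by
    field_simp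
  simp only [hC, integral_bivNormal_eq_mul_gmix G hs11 hdet, integral_const_mul]
  rw [mul_div_right_comm]

/-- **Conditional CDF of `Z` given `L = l` under the partially Bayes model.**
With `(Z, L) | b ~ N((0, b), Σ)`, `b ~ G`, `Σ` positive definite with inverse `Ω`,
the conditional CDF (the normalized partial integral of the joint marginal density)
equals `(C(Σ)/f_G(l)) ∫_{−∞}^z exp(−u²/(2Σ₁₁)) f_G((Ω₁₂/Ω₂₂)u + l; Ω₂₂⁻¹) du`,
where `f_G(l) = f_G(l; Σ₂₂)`, `C(Σ) = (2π|Σ|Ω₂₂)^{−1/2}`, `Ω₁₂/Ω₂₂ = −s12/s11`,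
and `Ω₂₂⁻¹ = |Σ|/s11`. -/
theorem stmt6 (G : Measure ℝ) [IsProbabilityMeasure G]
    (s11 s12 s22 : ℝ) (hs11 : 0 < s11) (hs22 : 0 < s22)
    (hdet : 0 < s11 * s22 - s12 ^ 2)
    (z l : ℝ) (hl : 0 < gmix G s22 l) :
    (∫ u in Set.Iic z, ∫ b, bivNormal s11 s12 s22 b u l ∂G) / gmix G s22 l =
      (Real.sqrt (2 * Real.pi * (s11 * s22 - s12 ^ 2) *
          (s11 / (s11 * s22 - s12 ^ 2))))⁻¹ / gmix G s22 l *
        ∫ u in Set.Iic z,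
          Real.exp (-u ^ 2 / (2 * s11)) *
            gmix G ((s11 * s22 - s12 ^ 2) / s11) (-s12 / s11 * u + l) :=
  stmt6_general G s11 s12 s22 hs11 hdet z l
end

section
/- Let g₀ be the N(0, A) density, ε ∈ (0,1), ω > 0, and g₁(b) = g₀(b)(1 + ε(cos(ωb) − e^{−Aω²/2})). Let G_j have density g_j and let P_{j,1} be the law of b̂ = b + ξ with b ~ G_j and ξ ~ N(0, τ²) independent. If ω² = log(n)·(A+τ²)/(Aτ²), then the chi-square divergence satisfies χ²(P_{1,1}, P_{0,1}) = (ε²/(2n))(1 − n^{−A/τ²})² ≤ ε²/(2n). -/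
/-!
Multiplying the `N(0, A)` prior by the `N(b, τ²)` likelihood factors as the `N(0, A + τ²)`
density in `x` times a Gaussian posterior density in `b`. Hence `m₀` is the `N(0, A + τ²)`
density, and the Gaussian characteristic function gives
`m₁ = m₀ · (1 + ε (c cos (a x) − d))` with `c = e^{−ω²Aτ²/(2(A+τ²))}`, `a = ωA/(A+τ²)`,
`d = e^{−Aω²/2}`. The χ²-divergence is then `ε² 𝔼[(c cos (aX) − d)²]` for `X ~ N(0, A + τ²)`,
again a characteristic-function computation, and the choice of `ω` turns every exponential
that occurs into a monomial in `n^{−1/2}` and `n^{−A/(2τ²)}`.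
-/

open MeasureTheory ProbabilityTheory Real
open scoped NNReal

lemma gaussianPDFReal_mul_gaussianPDFReal (μ x b : ℝ) {v w : ℝ≥0} (hv : v ≠ 0)
    (hw : w ≠ 0) :
    gaussianPDFReal b w x * gaussianPDFReal μ v b =
      gaussianPDFReal μ (v + w) x *
        gaussianPDFReal ((w * μ + v * x) / (v + w)) (v * w / (v + w)) b := by
  simp only [gaussianPDFReal, NNReal.coe_add, NNReal.coe_mul, NNReal.coe_div]
  rw [mul_mul_mul_comm, mul_mul_mul_comm _ (rexp _), ← exp_add, ← exp_add, ← mul_inv,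
    ← mul_inv, ← sqrt_mul (by positivity), ← sqrt_mul (by positivity)]
  congr 1
  · congr 2
    field_simp
  · congr 1
    field_simp
    ring

lemma integrable_cos_mul {μ : Measure ℝ} [IsFiniteMeasure μ] (t : ℝ) :
    Integrable (fun x => cos (t * x)) μ :=
  .of_bound (by fun_prop) 1 (.of_forall fun x => by simpa using abs_cos_le_one (t * x))

lemma integral_cos_mul_gaussianReal (μ : ℝ) (v : ℝ≥0) (t : ℝ) :
    ∫ x, cos (t * x) ∂gaussianReal μ v = rexp (-(v * t ^ 2 / 2)) * cos (t * μ) := by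
  have hint : Integrable (fun x : ℝ => Complex.exp (t * x * Complex.I)) (gaussianReal μ v) :=
    .of_bound (by fun_prop) 1 (.of_forall fun x => by
      rw [← Complex.ofReal_mul, Complex.norm_exp_ofReal_mul_I])
  calc ∫ x, cos (t * x) ∂gaussianReal μ v
      = ∫ x, RCLike.re (Complex.exp (t * x * Complex.I)) ∂gaussianReal μ v := by
        simp_rw [← Complex.ofReal_mul, RCLike.re_to_complex, Complex.exp_ofReal_mul_I_re]
    _ = (charFun (gaussianReal μ v) t).re := by rw [integral_re hint, charFun_apply_real]; rfl
    _ = _ := by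
      rw [charFun_gaussianReal, show (t : ℂ) * μ * Complex.I - v * t ^ 2 / 2 =
          ((-(v * t ^ 2 / 2) : ℝ) : ℂ) + ((t * μ : ℝ) : ℂ) * Complex.I by push_cast; ring,
        Complex.exp_add, ← Complex.ofReal_exp, Complex.re_ofReal_mul,
        Complex.exp_ofReal_mul_I_re]

lemma integral_gaussianPDFReal_mul_gaussianPDFReal_mul (μ x : ℝ) {v w : ℝ≥0} (hv : v ≠ 0)
    (hw : w ≠ 0) (f : ℝ → ℝ) :
    ∫ b, gaussianPDFReal b w x * (gaussianPDFReal μ v b * f b) =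
      gaussianPDFReal μ (v + w) x *
        ∫ b, f b ∂gaussianReal ((w * μ + v * x) / (v + w)) (v * w / (v + w)) := by
  have hvw : v * w / (v + w) ≠ 0 := by positivity
  simp_rw [← mul_assoc, gaussianPDFReal_mul_gaussianPDFReal μ x _ hv hw, mul_assoc,
    integral_const_mul, integral_gaussianReal_eq_integral_smul hvw, smul_eq_mul]

lemma integral_gaussianPDFReal_mul_gaussianPDFReal_mul_one_add_cos (x ε ω d : ℝ) {v w : ℝ≥0}
    (hv : v ≠ 0) (hw : w ≠ 0) :
    ∫ b, gaussianPDFReal b w x * (gaussianPDFReal 0 v b * (1 + ε * (cos (ω * b) - d))) =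
      gaussianPDFReal 0 (v + w) x *
        (1 + ε * (rexp (-(v * w / (v + w) * ω ^ 2 / 2)) * cos (ω * v / (v + w) * x) - d)) := by
  have hcos :=
    integrable_cos_mul (μ := gaussianReal ((w * 0 + v * x) / (v + w)) (v * w / (v + w))) ω
  rw [integral_gaussianPDFReal_mul_gaussianPDFReal_mul 0 x hv hw,
    integral_add (integrable_const _) ((hcos.sub' (integrable_const d)).const_mul ε),
    integral_const_mul, integral_sub hcos (integrable_const d), integral_cos_mul_gaussianReal]
  simp only [integral_const, probReal_univ, smul_eq_mul, one_mul, mul_zero, zero_add]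
  push_cast
  ring_nf

lemma integral_mul_cos_sub_sq_gaussianReal (v : ℝ≥0) (a c d : ℝ) :
    ∫ x, (c * cos (a * x) - d) ^ 2 ∂gaussianReal 0 v =
      c ^ 2 / 2 * (1 + rexp (-(2 * v * a ^ 2))) - 2 * c * d * rexp (-(v * a ^ 2 / 2)) +
        d ^ 2 := by
  have hexpand : ∀ x, (c * cos (a * x) - d) ^ 2 =
      (c ^ 2 / 2 + d ^ 2) + (c ^ 2 / 2 * cos (2 * a * x) - 2 * c * d * cos (a * x)) := by
    intro x
    rw [mul_assoc, cos_two_mul]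
    ring
  simp_rw [hexpand]
  have hcos (t : ℝ) := integrable_cos_mul (μ := gaussianReal 0 v) t
  rw [integral_add (integrable_const _) (((hcos _).const_mul _).sub' ((hcos _).const_mul _)),
    integral_sub ((hcos _).const_mul _) ((hcos _).const_mul _),
    integral_const_mul, integral_const_mul, integral_cos_mul_gaussianReal,
    integral_cos_mul_gaussianReal]
  simp only [integral_const, probReal_univ, smul_eq_mul, one_mul, mul_zero, cos_zero, mul_one]
  ring_nf

lemma integral_mul_one_add_div_sub_one_sq_mul_gaussianPDFReal (μ : ℝ) {v : ℝ≥0} (hv : v ≠ 0)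
    (ε : ℝ) (h : ℝ → ℝ) :
    ∫ x, (gaussianPDFReal μ v x * (1 + ε * h x) / gaussianPDFReal μ v x - 1) ^ 2 *
        gaussianPDFReal μ v x = ε ^ 2 * ∫ x, h x ^ 2 ∂gaussianReal μ v := by
  rw [integral_gaussianReal_eq_integral_smul hv, ← integral_const_mul]
  congr 1; ext x
  rw [mul_div_cancel_left₀ _ (gaussianPDFReal_pos μ v x hv).ne', smul_eq_mul]
  ring

lemma cos_perturbation_chiSq_eq {A τ ω n : ℝ} (hA : 0 < A) (hτ : 0 < τ) (hn : 0 < n)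
    (hω : ω ^ 2 = log n * (A + τ) / (A * τ)) :
    rexp (-(A * τ / (A + τ) * ω ^ 2 / 2)) ^ 2 / 2 *
          (1 + rexp (-(2 * (A + τ) * (ω * A / (A + τ)) ^ 2))) -
        2 * rexp (-(A * τ / (A + τ) * ω ^ 2 / 2)) * rexp (-A * ω ^ 2 / 2) *
          rexp (-((A + τ) * (ω * A / (A + τ)) ^ 2 / 2)) +
        rexp (-A * ω ^ 2 / 2) ^ 2 =
      (1 - n ^ (-(A / τ))) ^ 2 / (2 * n) := by
  have hc : rexp (-(A * τ / (A + τ) * ω ^ 2 / 2)) = rexp (-(log n / 2)) := by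
    rw [hω]; field_simp
  have hd :
      rexp (-A * ω ^ 2 / 2) = rexp (-(log n / 2)) * rexp (-(log n * (A / τ) / 2)) := by
    rw [← exp_add, hω]; field_simp; ring_nf
  have hr4 : rexp (-(2 * (A + τ) * (ω * A / (A + τ)) ^ 2)) =
      rexp (-(log n * (A / τ) / 2)) ^ 4 := by
    rw [← exp_nat_mul, div_pow, mul_pow, hω]; field_simp; ring_nf
  have hr :
      rexp (-((A + τ) * (ω * A / (A + τ)) ^ 2 / 2)) = rexp (-(log n * (A / τ) / 2)) := by
    rw [div_pow, mul_pow, hω]; field_simp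
  have hp2 : n⁻¹ = rexp (-(log n / 2)) ^ 2 := by
    rw [← exp_nat_mul, show ((2 : ℕ) : ℝ) * -(log n / 2) = -log n by ring, exp_neg, exp_log hn]
  have hr2 : n ^ (-(A / τ)) = rexp (-(log n * (A / τ) / 2)) ^ 2 := by
    rw [← exp_nat_mul, rpow_def_of_pos hn]; ring_nf
  rw [hc, hd, hr4, hr, hr2, div_eq_mul_inv _ (2 * n), mul_inv, hp2]
  ring

theorem stmt12_general (A τ2 : ℝ) (hA : 0 < A) (hτ : 0 < τ2) (n : ℕ) (hn : 2 ≤ n)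
    (ε : ℝ)
    (ω : ℝ) (hω : ω ^ 2 = Real.log n * (A + τ2) / (A * τ2))
    (g₀ g₁ m₀ m₁ : ℝ → ℝ)
    (hg₀ : ∀ b, g₀ b = (Real.sqrt (2 * Real.pi * A))⁻¹ * Real.exp (-b ^ 2 / (2 * A)))
    (hg₁ : ∀ b, g₁ b = g₀ b * (1 + ε * (Real.cos (ω * b) - Real.exp (-A * ω ^ 2 / 2))))
    (hm₀ : ∀ x, m₀ x = ∫ b, (Real.sqrt (2 * Real.pi * τ2))⁻¹ *
      Real.exp (-(x - b) ^ 2 / (2 * τ2)) * g₀ b)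
    (hm₁ : ∀ x, m₁ x = ∫ b, (Real.sqrt (2 * Real.pi * τ2))⁻¹ *
      Real.exp (-(x - b) ^ 2 / (2 * τ2)) * g₁ b) :
    (∫ x, (m₁ x / m₀ x - 1) ^ 2 * m₀ x)
      = ε ^ 2 / (2 * n) * (1 - (n : ℝ) ^ (-(A / τ2))) ^ 2 ∧
    (∫ x, (m₁ x / m₀ x - 1) ^ 2 * m₀ x) ≤ ε ^ 2 / (2 * n) := by
  lift A to ℝ≥0 using hA.le
  lift τ2 to ℝ≥0 using hτ.le
  have hA₀ : A ≠ 0 := by exact_mod_cast hA.ne'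
  have hτ₀ : τ2 ≠ 0 := by exact_mod_cast hτ.ne'
  have hg₀' : ∀ b, g₀ b = gaussianPDFReal 0 A b := fun b => by
    rw [hg₀, gaussianPDFReal, sub_zero]
  have hker : ∀ x b, (√(2 * π * τ2))⁻¹ * rexp (-(x - b) ^ 2 / (2 * τ2)) =
      gaussianPDFReal b τ2 x := fun _ _ => rfl
  have hm₀' : ∀ x, m₀ x = gaussianPDFReal 0 (A + τ2) x := fun x => by
    calc m₀ x = ∫ b, gaussianPDFReal b τ2 x * (gaussianPDFReal 0 A b * 1) := by
          simp only [hm₀, hker, hg₀', mul_one]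
      _ = _ := by rw [integral_gaussianPDFReal_mul_gaussianPDFReal_mul 0 x hA₀ hτ₀]; simp
  have hm₁' : ∀ x, m₁ x = gaussianPDFReal 0 (A + τ2) x *
      (1 + ε * (rexp (-(A * τ2 / (A + τ2) * ω ^ 2 / 2)) * cos (ω * A / (A + τ2) * x) -
        rexp (-A * ω ^ 2 / 2))) := fun x => by
    rw [hm₁, ← integral_gaussianPDFReal_mul_gaussianPDFReal_mul_one_add_cos x ε ω _ hA₀ hτ₀]
    simp only [hker, hg₁, hg₀']
  have hη : (1 - (n : ℝ) ^ (-(A / τ2 : ℝ))) ^ 2 ≤ 1 :=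
    pow_le_one₀ (sub_nonneg.2 (rpow_le_one_of_one_le_of_nonpos (Nat.one_le_cast.2 (by omega))
      (neg_nonpos.2 (by positivity)))) (sub_le_self _ (by positivity))
  simp_rw [hm₁', hm₀']
  rw [integral_mul_one_add_div_sub_one_sq_mul_gaussianPDFReal 0 (by positivity) ε,
    integral_mul_cos_sub_sq_gaussianReal, NNReal.coe_add,
    cos_perturbation_chiSq_eq hA hτ (by positivity) hω, ← mul_comm_div]
  exact ⟨rfl, mul_le_of_le_one_right (by positivity) hη⟩

/-- **Chi-square divergence between perturbed Gaussian mixture marginals.** Let `g₀` be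
the `N(0, A)` density and `g₁(b) = g₀(b)(1 + ε(cos(ωb) − e^{−Aω²/2}))` with
`ω² = log(n)·(A+τ²)/(Aτ²)`. Let `m_j = g_j * φ(·; τ²)` be the marginal density of
`b̂ = b + ξ`, `b ~ G_j`, `ξ ~ N(0, τ²)`. Then
`χ²(P₁,₁, P₀,₁) = ∫ (m₁/m₀ − 1)² m₀ = (ε²/(2n))(1 − n^{−A/τ²})² ≤ ε²/(2n)`. -/
theorem stmt12 (A τ2 : ℝ) (hA : 0 < A) (hτ : 0 < τ2) (n : ℕ) (hn : 2 ≤ n)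
    (ε : ℝ) (hε : ε ∈ Set.Ioo (0 : ℝ) 1)
    (ω : ℝ) (hω : ω ^ 2 = Real.log n * (A + τ2) / (A * τ2))
    (g₀ g₁ m₀ m₁ : ℝ → ℝ)
    (hg₀ : ∀ b, g₀ b = (Real.sqrt (2 * Real.pi * A))⁻¹ * Real.exp (-b ^ 2 / (2 * A)))
    (hg₁ : ∀ b, g₁ b = g₀ b * (1 + ε * (Real.cos (ω * b) - Real.exp (-A * ω ^ 2 / 2))))
    (hm₀ : ∀ x, m₀ x = ∫ b, (Real.sqrt (2 * Real.pi * τ2))⁻¹ *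
      Real.exp (-(x - b) ^ 2 / (2 * τ2)) * g₀ b)
    (hm₁ : ∀ x, m₁ x = ∫ b, (Real.sqrt (2 * Real.pi * τ2))⁻¹ *
      Real.exp (-(x - b) ^ 2 / (2 * τ2)) * g₁ b) :
    (∫ x, (m₁ x / m₀ x - 1) ^ 2 * m₀ x)
      = ε ^ 2 / (2 * n) * (1 - (n : ℝ) ^ (-(A / τ2))) ^ 2 ∧
    (∫ x, (m₁ x / m₀ x - 1) ^ 2 * m₀ x) ≤ ε ^ 2 / (2 * n) :=
  stmt12_general A τ2 hA hτ n hn ε ω hω g₀ g₁ m₀ m₁ hg₀ hg₁ hm₀ hm₁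
end

section
/- Let U be a random variable with U | 𝓛 ~ Unif(0,1) for a sigma-algebra 𝓛, and let Û be another random variable with |Û − U| ≤ Δ almost surely, where Δ is 𝓛-measurable and Δ ≥ 0. Then for every α ∈ (0,1), |P(α/2 ≤ Û ≤ 1 − α/2 | 𝓛) − (1 − α)| ≤ 2Δ almost surely, and hence |P(α/2 ≤ Û ≤ 1 − α/2) − (1 − α)| ≤ 2E[Δ]. -/
open MeasureTheory ProbabilityTheory

private lemma ind_comp {Ω : Type*} (s : Set ℝ) (f : Ω → ℝ) :
    (fun ω => Set.indicator s (fun _ => (1:ℝ)) (f ω))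
      = (f ⁻¹' s).indicator (fun _ => (1:ℝ)) := by
  funext ω
  rfl

/-- **Coverage from a conditionally uniform pivot.** Let `U` be conditionally
`Unif(0,1)` given a sub-σ-algebra `𝓛` (i.e. for every Borel `s`,
`E[𝟙{U ∈ s} | 𝓛] = Leb(s ∩ [0,1])` a.e.), and let `Uhat` satisfy `|Uhat − U| ≤ Δ` a.s. for
an `𝓛`-measurable `Δ ≥ 0`. Then for every `α ∈ (0,1)`,
`|P(α/2 ≤ Uhat ≤ 1 − α/2 | 𝓛) − (1 − α)| ≤ 2Δ` a.e., and hence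
`|P(α/2 ≤ Uhat ≤ 1 − α/2) − (1 − α)| ≤ 2E[Δ]`. -/
theorem stmt14 {Ω : Type*} (𝓛 : MeasurableSpace Ω) {m0 : MeasurableSpace Ω} (μ : Measure Ω)
    [IsProbabilityMeasure μ] (h𝓛 : 𝓛 ≤ m0)
    (U Uhat Δ : Ω → ℝ) (hU : Measurable U) (hUhat : Measurable Uhat)
    (hΔmeas : Measurable[𝓛] Δ) (hΔ0 : ∀ ω, 0 ≤ Δ ω) (hΔint : Integrable Δ μ)
    (hunif : ∀ s : Set ℝ, MeasurableSet s →
      μ[fun ω => Set.indicator s (fun _ => (1 : ℝ)) (U ω) | 𝓛]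
        =ᵐ[μ] fun _ => (volume (s ∩ Set.Icc (0 : ℝ) 1)).toReal)
    (hclose : ∀ᵐ ω ∂μ, |Uhat ω - U ω| ≤ Δ ω)
    (α : ℝ) (hα : α ∈ Set.Ioo (0 : ℝ) 1) :
    (∀ᵐ ω ∂μ,
      |(μ[fun ω' => Set.indicator {ω'' | α / 2 ≤ Uhat ω'' ∧ Uhat ω'' ≤ 1 - α / 2}
          (fun _ => (1 : ℝ)) ω' | 𝓛]) ω - (1 - α)| ≤ 2 * Δ ω) ∧
    |(μ {ω | α / 2 ≤ Uhat ω ∧ Uhat ω ≤ 1 - α / 2}).toReal - (1 - α)| ≤ 2 * ∫ ω, Δ ω ∂μ := by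
  obtain ⟨hα0, hα1⟩ := hα
  set A : Set Ω := {ω | α / 2 ≤ Uhat ω ∧ Uhat ω ≤ 1 - α / 2} with hA_def
  have hA_meas : MeasurableSet[m0] A := by
    have : A = Uhat ⁻¹' Set.Icc (α / 2) (1 - α / 2) := rfl
    rw [this]; exact hUhat measurableSet_Icc
  have hA_int : Integrable (A.indicator (fun _ => (1:ℝ))) μ :=
    Integrable.indicator (μ := μ) (integrable_const (1:ℝ)) hA_meas
  set g := μ[A.indicator (fun _ => (1:ℝ)) | 𝓛] with hg_def
  have hgoal_eq : (μ[fun ω' => Set.indicator {ω'' | α / 2 ≤ Uhat ω'' ∧ Uhat ω'' ≤ 1 - α / 2}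
      (fun _ => (1 : ℝ)) ω' | 𝓛]) = g := rfl
  -- key per-rational-q bound
  have key : ∀ q : ℚ, ∀ᵐ ω ∂μ, (0:ℝ) ≤ (q:ℝ) → Δ ω ≤ (q:ℝ) → |g ω - (1 - α)| ≤ 2 * (q:ℝ) := by
    intro q
    by_cases hq : (0:ℝ) ≤ (q:ℝ)
    swap
    · filter_upwards with ω h; exact absurd h hq
    set B : Set Ω := Δ ⁻¹' Set.Iic (q:ℝ) with hB_def
    have hB𝓛 : MeasurableSet[𝓛] B := hΔmeas measurableSet_Iic
    have hB : MeasurableSet[m0] B := h𝓛 _ hB𝓛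
    -- upper bound
    set s₁ : Set ℝ := Set.Icc (α / 2 - q) (1 - α / 2 + q) with hs₁_def
    have hs₁ : MeasurableSet s₁ := measurableSet_Icc
    have h1int : Integrable (fun ω => Set.indicator s₁ (fun _ => (1:ℝ)) (U ω)) μ := by
      rw [ind_comp]; exact Integrable.indicator (μ := μ) (integrable_const (1:ℝ)) (hU measurableSet_Icc)
    have hpw1 : (B.indicator (A.indicator (fun _ => (1:ℝ))))
        ≤ᵐ[μ] fun ω => Set.indicator s₁ (fun _ => (1:ℝ)) (U ω) := by
      filter_upwards [hclose] with ω hcl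
      by_cases hωB : ω ∈ B
      · rw [Set.indicator_of_mem hωB]
        by_cases hωA : ω ∈ A
        · rw [Set.indicator_of_mem hωA]
          have hBq : Δ ω ≤ (q:ℝ) := hωB
          obtain ⟨h1, h2⟩ := abs_le.mp hcl
          obtain ⟨h3, h4⟩ := hωA
          have : U ω ∈ s₁ := ⟨by linarith, by linarith⟩
          rw [Set.indicator_of_mem this]
        · rw [Set.indicator_of_notMem hωA]
          exact Set.indicator_nonneg (fun _ _ => zero_le_one) _
      · rw [Set.indicator_of_notMem hωB]
        exact Set.indicator_nonneg (fun _ _ => zero_le_one) _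
    have hup : μ[B.indicator (A.indicator (fun _ => (1:ℝ)))|𝓛]
        ≤ᵐ[μ] μ[fun ω => Set.indicator s₁ (fun _ => (1:ℝ)) (U ω)|𝓛] :=
      condExp_mono (Integrable.indicator (μ := μ) hA_int hB) h1int hpw1
    have hcond1 : μ[B.indicator (A.indicator (fun _ => (1:ℝ)))|𝓛] =ᵐ[μ] B.indicator g :=
      condExp_indicator hA_int hB𝓛
    have hunif1 := hunif s₁ hs₁
    have hc₁ : (volume (s₁ ∩ Set.Icc (0:ℝ) 1)).toReal ≤ 1 - α + 2 * q := by
      have hmono : volume (s₁ ∩ Set.Icc (0:ℝ) 1) ≤ volume s₁ := measure_mono Set.inter_subset_left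
      have hvol : volume s₁ = ENNReal.ofReal (1 - α + 2 * q) := by
        rw [hs₁_def, Real.volume_Icc]; ring_nf
      calc (volume (s₁ ∩ Set.Icc (0:ℝ) 1)).toReal
          ≤ (volume s₁).toReal := ENNReal.toReal_mono (by rw [hvol]; exact ENNReal.ofReal_ne_top) hmono
        _ = 1 - α + 2 * q := by rw [hvol, ENNReal.toReal_ofReal (by linarith)]
    -- lower bound
    set s₂ : Set ℝ := Set.Icc (α / 2 + q) (1 - α / 2 - q) with hs₂_def
    have hs₂ : MeasurableSet s₂ := measurableSet_Icc
    have h2int : Integrable (fun ω => Set.indicator s₂ (fun _ => (1:ℝ)) (U ω)) μ := by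
      rw [ind_comp]; exact Integrable.indicator (μ := μ) (integrable_const (1:ℝ)) (hU measurableSet_Icc)
    have hpw2 : (B.indicator (fun ω => Set.indicator s₂ (fun _ => (1:ℝ)) (U ω)))
        ≤ᵐ[μ] A.indicator (fun _ => (1:ℝ)) := by
      filter_upwards [hclose] with ω hcl
      by_cases hωB : ω ∈ B
      · rw [Set.indicator_of_mem hωB]
        by_cases hωs : U ω ∈ s₂
        · rw [Set.indicator_of_mem hωs]
          have hBq : Δ ω ≤ (q:ℝ) := hωB
          obtain ⟨h1, h2⟩ := abs_le.mp hcl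
          obtain ⟨h3, h4⟩ := hωs
          have : ω ∈ A := ⟨by linarith, by linarith⟩
          rw [Set.indicator_of_mem this]
        · rw [Set.indicator_of_notMem hωs]
          exact Set.indicator_nonneg (fun _ _ => zero_le_one) _
      · rw [Set.indicator_of_notMem hωB]
        exact Set.indicator_nonneg (fun _ _ => zero_le_one) _
    have hlo : μ[B.indicator (fun ω => Set.indicator s₂ (fun _ => (1:ℝ)) (U ω))|𝓛]
        ≤ᵐ[μ] g :=
      condExp_mono (Integrable.indicator (μ := μ) h2int hB) hA_int hpw2
    have hcond2 : μ[B.indicator (fun ω => Set.indicator s₂ (fun _ => (1:ℝ)) (U ω))|𝓛]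
        =ᵐ[μ] B.indicator (μ[fun ω => Set.indicator s₂ (fun _ => (1:ℝ)) (U ω)|𝓛]) :=
      condExp_indicator h2int hB𝓛
    have hunif2 := hunif s₂ hs₂
    have hc₂ : 1 - α - 2 * q ≤ (volume (s₂ ∩ Set.Icc (0:ℝ) 1)).toReal := by
      by_cases hle : α / 2 + q ≤ 1 - α / 2 - q
      · have hsub : s₂ ⊆ Set.Icc (0:ℝ) 1 := Set.Icc_subset_Icc (by linarith) (by linarith)
        rw [Set.inter_eq_left.mpr hsub, hs₂_def, Real.volume_Icc]
        have : 1 - α / 2 - q - (α / 2 + q) = 1 - α - 2 * q := by ring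
        rw [this, ENNReal.toReal_ofReal (by linarith)]
      · have : 1 - α - 2 * (q:ℝ) ≤ 0 := by push_neg at hle; linarith
        exact le_trans this ENNReal.toReal_nonneg
    filter_upwards [hup, hcond1, hunif1, hlo, hcond2, hunif2] with ω e1 e2 e3 e4 e5 e6 _ hΔq
    have hωB : ω ∈ B := hΔq
    have hupper : g ω ≤ 1 - α + 2 * q := by
      have : g ω = B.indicator g ω := (Set.indicator_of_mem hωB g).symm
      rw [this, ← e2]
      calc (μ[B.indicator (A.indicator (fun _ => (1:ℝ)))|𝓛]) ω
          ≤ (μ[fun ω => Set.indicator s₁ (fun _ => (1:ℝ)) (U ω)|𝓛]) ω := e1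
        _ = (volume (s₁ ∩ Set.Icc (0:ℝ) 1)).toReal := e3
        _ ≤ 1 - α + 2 * q := hc₁
    have hlower : 1 - α - 2 * q ≤ g ω := by
      have h5 : (μ[B.indicator (fun ω => Set.indicator s₂ (fun _ => (1:ℝ)) (U ω))|𝓛]) ω
          = B.indicator (μ[fun ω => Set.indicator s₂ (fun _ => (1:ℝ)) (U ω)|𝓛]) ω := e5
      calc 1 - α - 2 * (q:ℝ)
          ≤ (volume (s₂ ∩ Set.Icc (0:ℝ) 1)).toReal := hc₂
        _ = (μ[fun ω => Set.indicator s₂ (fun _ => (1:ℝ)) (U ω)|𝓛]) ω := e6.symm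
        _ = B.indicator (μ[fun ω => Set.indicator s₂ (fun _ => (1:ℝ)) (U ω)|𝓛]) ω :=
            (Set.indicator_of_mem hωB _).symm
        _ = (μ[B.indicator (fun ω => Set.indicator s₂ (fun _ => (1:ℝ)) (U ω))|𝓛]) ω := h5.symm
        _ ≤ g ω := e4
    rw [abs_le]; constructor <;> linarith
  have main : ∀ᵐ ω ∂μ, |g ω - (1 - α)| ≤ 2 * Δ ω := by
    filter_upwards [ae_all_iff.2 key] with ω hω
    refine le_of_forall_pos_le_add (fun ε hε => ?_)
    obtain ⟨q, hq1, hq2⟩ := exists_rat_btwn (show Δ ω < Δ ω + ε / 2 by linarith)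
    have h0q : (0:ℝ) ≤ (q:ℝ) := le_trans (hΔ0 ω) hq1.le
    have := hω q h0q hq1.le
    linarith
  refine ⟨main, ?_⟩
  have hg_int : Integrable g μ := integrable_condExp
  have hμA : (μ A).toReal = ∫ ω, g ω ∂μ := by
    rw [hg_def, integral_condExp h𝓛, integral_indicator_const (μ := μ) (1:ℝ) hA_meas,
      smul_eq_mul, mul_one, Measure.real]
  have hconst : ∫ (_ : Ω), (1 - α) ∂μ = 1 - α := by
    simp [integral_const, measure_univ]
  have habs : |∫ ω, g ω ∂μ - (1 - α)| ≤ 2 * ∫ ω, Δ ω ∂μ := by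
    have h1 : ∫ ω, g ω ∂μ - (1 - α) = ∫ ω, (g ω - (1 - α)) ∂μ := by
      rw [integral_sub hg_int (integrable_const _), hconst]
    rw [h1]
    have h2 : |∫ ω, (g ω - (1 - α)) ∂μ| ≤ ∫ ω, |g ω - (1 - α)| ∂μ := by
      simpa [Real.norm_eq_abs] using
        norm_integral_le_integral_norm (μ := μ) (fun ω => g ω - (1 - α))
    refine le_trans h2 ?_
    have h3 : ∫ ω, |g ω - (1 - α)| ∂μ ≤ ∫ ω, 2 * Δ ω ∂μ :=
      integral_mono_ae ((hg_int.sub (integrable_const _)).abs) (hΔint.const_mul 2) main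
    rw [integral_const_mul] at h3
    exact h3
  rw [hμA]
  exact habs
end

section
/- Let f, g, f̂, ĝ be real numbers with g, ĝ > 0, 0 ≤ f/g ≤ 1 and 0 ≤ f̂/ĝ ≤ 1, and set g* = (g + ĝ)/2. Then |f/g − f̂/ĝ| ≤ |f − f̂|/g* + |g − ĝ|/g*. -/
/-! Writing `a = f/g`, `b = f̂/ĝ` and `g* = (g + ĝ)/2`, one has the identity
`g* (a - b) = (f - f̂) + (a + b)(ĝ - g)/2`; since `|a + b| ≤ 2`, the second term is at most
`|g - ĝ|` in absolute value, and dividing by `g* > 0` gives the bound. -/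

section

variable {K : Type*} [Field K] [LinearOrder K] [IsStrictOrderedRing K]

theorem midpoint_mul_sub_eq (a b g g' : K) :
    (g + g') / 2 * (a - b) = (a * g - b * g') + (a + b) * (g' - g) / 2 := by
  ring

theorem abs_midpoint_mul_sub_le (a b g g' : K) (hab : |a + b| ≤ 2) :
    |(g + g') / 2 * (a - b)| ≤ |a * g - b * g'| + |g - g'| := by
  have hcorr : |(a + b) * (g' - g) / 2| ≤ |g - g'| := by
    rw [abs_div, abs_mul, abs_two, abs_sub_comm g']
    calc |a + b| * |g - g'| / 2 ≤ 2 * |g - g'| / 2 := by gcongr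
      _ = |g - g'| := by ring
  rw [midpoint_mul_sub_eq]
  exact (abs_add_le _ _).trans (by gcongr)

end

/-- **Ratio-difference decomposition with symmetrized denominator.** For reals
`f, g, f̂, ĝ` with `g, ĝ > 0`, `0 ≤ f/g ≤ 1`, `0 ≤ f̂/ĝ ≤ 1`, and
`g* = (g + ĝ)/2`, one has `|f/g − f̂/ĝ| ≤ |f − f̂|/g* + |g − ĝ|/g*`. -/
theorem stmt16 (f g fh gh : ℝ) (hg : 0 < g) (hgh : 0 < gh)
    (h1 : 0 ≤ f / g) (h2 : f / g ≤ 1) (h3 : 0 ≤ fh / gh) (h4 : fh / gh ≤ 1) :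
    |f / g - fh / gh| ≤ |f - fh| / ((g + gh) / 2) + |g - gh| / ((g + gh) / 2) := by
  have hmid : 0 < (g + gh) / 2 := by positivity
  have hsum : |f / g + fh / gh| ≤ 2 := abs_le.2 ⟨by linarith, by linarith⟩
  calc |f / g - fh / gh|
      = |(g + gh) / 2 * (f / g - fh / gh)| / ((g + gh) / 2) := by
        rw [abs_mul, abs_of_pos hmid, mul_div_cancel_left₀ _ hmid.ne']
    _ ≤ (|f / g * g - fh / gh * gh| + |g - gh|) / ((g + gh) / 2) := by
        gcongr
        exact abs_midpoint_mul_sub_le _ _ _ _ hsum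
    _ = |f - fh| / ((g + gh) / 2) + |g - gh| / ((g + gh) / 2) := by
        rw [div_mul_cancel₀ f hg.ne', div_mul_cancel₀ fh hgh.ne', add_div]
end

section
/- Let P₀, P₁ be probability measures on a common space with total variation distance TV(P₀, P₁), and let E be an event with P₀(E) ≥ p. Then the common part P₀ ∧ P₁ (the measure with density min{p₀, p₁} w.r.t. a dominating measure) satisfies (P₀ ∧ P₁)(E) ≥ p − TV(P₀, P₁). Moreover, for any measurable function ψ̂ and measurable targets T₀, T₁, max_{j∈{0,1}} E_{P_j}|ψ̂ − T_j| ≥ (1/2)∫ |T₁ − T₀| d(P₀ ∧ P₁). -/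
open MeasureTheory ENNReal

/-! The common part `M = P₀ ∧ P₁` is a measure below both `P₀` and `P₁`, and since
`|a - b| = a + b - 2 min a b` its total mass is `1 - TV(P₀, P₁)`. Hence
`P₀(E) - M(E) ≤ P₀(univ) - M(univ) = TV(P₀, P₁)`. For the second bound, integrate the triangle
inequality `|T₁ - T₀| ≤ |ψ - T₀| + |ψ - T₁|` against `M` and use `M ≤ P₀`, `M ≤ P₁`. -/

lemma abs_sub_eq_add_sub_two_mul_min (a b : ℝ) : |a - b| = a + b - 2 * min a b := by
  rw [← max_sub_min_eq_abs']
  linarith [min_add_max a b]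

namespace MeasureTheory

variable {α : Type*} [MeasurableSpace α]

lemma measureReal_withDensity_ofReal {ν : Measure α} {f : α → ℝ} (hf0 : 0 ≤ f)
    (hfm : Measurable f) {s : Set α} (hs : MeasurableSet s) :
    (ν.withDensity fun x => ENNReal.ofReal (f x)).real s = ∫ x in s, f x ∂ν := by
  rw [measureReal_def, withDensity_apply _ hs,
    integral_eq_lintegral_of_nonneg_ae (ae_of_all _ hf0) hfm.aestronglyMeasurable]

lemma integrable_of_isFiniteMeasure_withDensity_ofReal {ν : Measure α} {f : α → ℝ}
    (hf0 : 0 ≤ f) (hfm : Measurable f)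
    [IsFiniteMeasure (ν.withDensity fun x => ENNReal.ofReal (f x))] : Integrable f ν := by
  refine ⟨hfm.aestronglyMeasurable, (hasFiniteIntegral_iff_ofReal (ae_of_all _ hf0)).2 ?_⟩
  rw [← setLIntegral_univ, ← withDensity_apply _ MeasurableSet.univ]
  exact measure_lt_top _ _

lemma integral_abs_sub_eq_add_sub_two_mul_integral_min {ν : Measure α} {f g : α → ℝ}
    (hf : Integrable f ν) (hg : Integrable g ν) :
    ∫ x, |f x - g x| ∂ν = ∫ x, f x ∂ν + ∫ x, g x ∂ν - 2 * ∫ x, min (f x) (g x) ∂ν := by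
  simp_rw [abs_sub_eq_add_sub_two_mul_min]
  have hadd : Integrable (fun x => f x + g x) ν := hf.add hg
  have hmin : Integrable (fun x => 2 * min (f x) (g x)) ν := (hf.inf hg).const_mul 2
  rw [integral_sub hadd hmin, integral_add hf hg, integral_const_mul]

lemma measureReal_sub_le_measureReal_univ_sub {μ ν : Measure α} [IsFiniteMeasure ν]
    (hμν : μ ≤ ν) {s : Set α} (hs : MeasurableSet s) :
    ν.real s - μ.real s ≤ ν.real Set.univ - μ.real Set.univ := by
  have := isFiniteMeasure_of_le ν hμν
  have hcompl : μ.real sᶜ ≤ ν.real sᶜ := by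
    rw [measureReal_def, measureReal_def, ENNReal.toReal_le_toReal (measure_ne_top _ _)
      (measure_ne_top _ _)]
    exact hμν sᶜ
  linarith [measureReal_add_measureReal_compl (μ := μ) hs,
    measureReal_add_measureReal_compl (μ := ν) hs]

lemma lintegral_abs_sub_div_two_le_max {μ P₀ P₁ : Measure α} (h₀ : μ ≤ P₀) (h₁ : μ ≤ P₁)
    {ψ T₀ T₁ : α → ℝ} (hψ : Measurable ψ) (hT₀ : Measurable T₀) :
    (∫⁻ x, ENNReal.ofReal |T₁ x - T₀ x| ∂μ) / 2
      ≤ max (∫⁻ x, ENNReal.ofReal |ψ x - T₀ x| ∂P₀) (∫⁻ x, ENNReal.ofReal |ψ x - T₁ x| ∂P₁) := by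
  set A := ∫⁻ x, ENNReal.ofReal |ψ x - T₀ x| ∂P₀
  set B := ∫⁻ x, ENNReal.ofReal |ψ x - T₁ x| ∂P₁
  have htri : ∀ x, ENNReal.ofReal |T₁ x - T₀ x|
      ≤ ENNReal.ofReal |ψ x - T₀ x| + ENNReal.ofReal |ψ x - T₁ x| := fun x => by
    rw [← ENNReal.ofReal_add (abs_nonneg _) (abs_nonneg _)]
    refine ENNReal.ofReal_le_ofReal ?_
    linarith [abs_sub_le (T₁ x) (ψ x) (T₀ x), abs_sub_comm (T₁ x) (ψ x)]
  rw [ENNReal.div_le_iff_le_mul (Or.inl two_ne_zero) (Or.inl ofNat_ne_top)]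
  calc ∫⁻ x, ENNReal.ofReal |T₁ x - T₀ x| ∂μ
      ≤ ∫⁻ x, ENNReal.ofReal |ψ x - T₀ x| + ENNReal.ofReal |ψ x - T₁ x| ∂μ :=
        lintegral_mono htri
    _ = ∫⁻ x, ENNReal.ofReal |ψ x - T₀ x| ∂μ + ∫⁻ x, ENNReal.ofReal |ψ x - T₁ x| ∂μ :=
        lintegral_add_left (by fun_prop) _
    _ ≤ A + B := add_le_add (lintegral_mono' h₀ le_rfl) (lintegral_mono' h₁ le_rfl)
    _ ≤ max A B * 2 := by rw [mul_two]; exact add_le_add (le_max_left _ _) (le_max_right _ _)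

end MeasureTheory

theorem stmt19_general {α : Type*} [MeasurableSpace α] (ν : Measure α)
    (p₀ p₁ : α → ℝ) (hp₀m : Measurable p₀) (hp₁m : Measurable p₁)
    (hp₀0 : ∀ x, 0 ≤ p₀ x) (hp₁0 : ∀ x, 0 ≤ p₁ x)
    (hP₀ : IsProbabilityMeasure (ν.withDensity fun x => ENNReal.ofReal (p₀ x)))
    (hP₁ : IsProbabilityMeasure (ν.withDensity fun x => ENNReal.ofReal (p₁ x))) :
    (∀ (E : Set α), MeasurableSet E → ∀ p : ℝ,
      p ≤ ((ν.withDensity fun x => ENNReal.ofReal (p₀ x)) E).toReal →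
      p - (1 / 2) * ∫ x, |p₀ x - p₁ x| ∂ν
        ≤ ((ν.withDensity fun x => ENNReal.ofReal (min (p₀ x) (p₁ x))) E).toReal) ∧
    (∀ (ψ T₀ T₁ : α → ℝ), Measurable ψ → Measurable T₀ → Measurable T₁ →
      (∫⁻ x, ENNReal.ofReal |T₁ x - T₀ x|
          ∂(ν.withDensity fun x => ENNReal.ofReal (min (p₀ x) (p₁ x)))) / 2
        ≤ max (∫⁻ x, ENNReal.ofReal |ψ x - T₀ x|
                ∂(ν.withDensity fun x => ENNReal.ofReal (p₀ x)))
              (∫⁻ x, ENNReal.ofReal |ψ x - T₁ x|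
                ∂(ν.withDensity fun x => ENNReal.ofReal (p₁ x)))) := by
  set M := ν.withDensity fun x => ENNReal.ofReal (min (p₀ x) (p₁ x))
  have hM₀ : M ≤ ν.withDensity fun x => ENNReal.ofReal (p₀ x) :=
    withDensity_mono (ae_of_all _ fun x => ofReal_le_ofReal (min_le_left _ _))
  have hM₁ : M ≤ ν.withDensity fun x => ENNReal.ofReal (p₁ x) :=
    withDensity_mono (ae_of_all _ fun x => ofReal_le_ofReal (min_le_right _ _))
  refine ⟨fun E hE p hp => ?_,
    fun ψ T₀ T₁ hψ hT₀ _ => lintegral_abs_sub_div_two_le_max hM₀ hM₁ hψ hT₀⟩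
  have hmass : ∀ {f : α → ℝ}, 0 ≤ f → Measurable f →
      (ν.withDensity fun x => ENNReal.ofReal (f x)).real Set.univ = ∫ x, f x ∂ν :=
    fun hf0 hfm => by rw [measureReal_withDensity_ofReal hf0 hfm .univ, setIntegral_univ]
  have hTV : (1 / 2) * ∫ x, |p₀ x - p₁ x| ∂ν = 1 - M.real Set.univ := by
    rw [integral_abs_sub_eq_add_sub_two_mul_integral_min
        (integrable_of_isFiniteMeasure_withDensity_ofReal hp₀0 hp₀m)
        (integrable_of_isFiniteMeasure_withDensity_ofReal hp₁0 hp₁m),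
      ← hmass hp₀0 hp₀m, ← hmass hp₁0 hp₁m,
      hmass (fun x => le_min (hp₀0 x) (hp₁0 x)) (hp₀m.min hp₁m),
      probReal_univ, probReal_univ]
    ring
  have hcommon := measureReal_sub_le_measureReal_univ_sub hM₀ hE
  rw [probReal_univ] at hcommon
  rw [← measureReal_def] at hp ⊢
  linarith

/-- **Le Cam two-point scheme.** Let `P₀ = ν.withDensity p₀`, `P₁ = ν.withDensity p₁` be
probability measures with densities w.r.t. a dominating measure `ν`, and let
`M = ν.withDensity (min p₀ p₁)` be their common part,
`TV(P₀,P₁) = (1/2)∫|p₀ − p₁| dν`. Then: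
(a) for any event `E` with `P₀(E) ≥ p`, `M(E) ≥ p − TV(P₀,P₁)`; and
(b) for any measurable `ψ̂` and targets `T₀, T₁`,
`max_j ∫|ψ̂ − T_j| dP_j ≥ (1/2)∫|T₁ − T₀| dM`. -/
theorem stmt19 {α : Type*} [MeasurableSpace α] (ν : Measure α) [SigmaFinite ν]
    (p₀ p₁ : α → ℝ) (hp₀m : Measurable p₀) (hp₁m : Measurable p₁)
    (hp₀0 : ∀ x, 0 ≤ p₀ x) (hp₁0 : ∀ x, 0 ≤ p₁ x)
    (hP₀ : IsProbabilityMeasure (ν.withDensity fun x => ENNReal.ofReal (p₀ x)))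
    (hP₁ : IsProbabilityMeasure (ν.withDensity fun x => ENNReal.ofReal (p₁ x))) :
    (∀ (E : Set α), MeasurableSet E → ∀ p : ℝ,
      p ≤ ((ν.withDensity fun x => ENNReal.ofReal (p₀ x)) E).toReal →
      p - (1 / 2) * ∫ x, |p₀ x - p₁ x| ∂ν
        ≤ ((ν.withDensity fun x => ENNReal.ofReal (min (p₀ x) (p₁ x))) E).toReal) ∧
    (∀ (ψ T₀ T₁ : α → ℝ), Measurable ψ → Measurable T₀ → Measurable T₁ →
      (∫⁻ x, ENNReal.ofReal |T₁ x - T₀ x|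
          ∂(ν.withDensity fun x => ENNReal.ofReal (min (p₀ x) (p₁ x)))) / 2
        ≤ max (∫⁻ x, ENNReal.ofReal |ψ x - T₀ x|
                ∂(ν.withDensity fun x => ENNReal.ofReal (p₀ x)))
              (∫⁻ x, ENNReal.ofReal |ψ x - T₁ x|
                ∂(ν.withDensity fun x => ENNReal.ofReal (p₁ x)))) :=
  stmt19_general ν p₀ p₁ hp₀m hp₁m hp₀0 hp₁0 hP₀ hP₁
end
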